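/- Fix ε > 0 and let γ₁(t) = (t, 1, 0) be a straight line and γ₂(s) = (0, 1 + ε cos s, ε sin s) a circle of radius ε centered at (0,1,0) in the plane x = 0. Then the Gauss linking integral (1/(4π)) ∫_{−∞}^{∞} ∫₀^{2π} ((γ₁'(t) × γ₂'(s)) · (γ₁(t) − γ₂(s))) / ‖γ₁(t) − γ₂(s)‖³ ds dt equals 1. -/

import Mathlib

open Real MeasureTheory
open scoped RealInnerProductSpace

/-- A vector in `ℝ³` (with the Euclidean norm) given by its three components. -/
noncomputable def vec3 (x y z : ℝ) : EuclideanSpace ℝ (Fin 3) :=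
  (WithLp.equiv 2 (Fin 3 → ℝ)).symm ![x, y, z]

/-- The cross product of two vectors in `ℝ³`. -/
noncomputable def cross3 (a b : EuclideanSpace ℝ (Fin 3)) : EuclideanSpace ℝ (Fin 3) :=
  vec3 (a 1 * b 2 - a 2 * b 1) (a 2 * b 0 - a 0 * b 2) (a 0 * b 1 - a 1 * b 0)

/-!
Every point of the circle lies at distance `√(t² + ε²)` from the point `γ₁ t` of the line, and the
numerator of the integrand is `ε²`, so the integrand does not depend on `s`. The inner integral is
therefore `2π ε² / (t² + ε²)^(3/2)`, and `t / √(t² + ε²)` is an antiderivative of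
`ε² / (t² + ε²)^(3/2)` running from `-1` to `1`, so the outer integral is `4π`.
-/

open Filter Topology

section Vec3

variable (a b c a' b' c' : ℝ)

lemma vec3_sub : vec3 a b c - vec3 a' b' c' = vec3 (a - a') (b - b') (c - c') := by
  ext i; fin_cases i <;> rfl

lemma cross3_vec3 : cross3 (vec3 a b c) (vec3 a' b' c') =
    vec3 (b * c' - c * b') (c * a' - a * c') (a * b' - b * a') := rfl

lemma inner_vec3 : ⟪vec3 a b c, vec3 a' b' c'⟫ = a * a' + b * b' + c * c' := by
  simp [PiLp.inner_apply, Fin.sum_univ_three, vec3]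
  ring

lemma norm_vec3 : ‖vec3 a b c‖ = √(a ^ 2 + b ^ 2 + c ^ 2) := by
  simp [EuclideanSpace.norm_eq, Fin.sum_univ_three, vec3, add_assoc]

end Vec3

lemma hasDerivAt_vec3 {x y z : ℝ → ℝ} {x' y' z' t : ℝ} (hx : HasDerivAt x x' t)
    (hy : HasDerivAt y y' t) (hz : HasDerivAt z z' t) :
    HasDerivAt (fun t => vec3 (x t) (y t) (z t)) (vec3 x' y' z') t := by
  have h : HasDerivAt (fun t => ![x t, y t, z t]) ![x', y', z'] t := by
    refine hasDerivAt_pi.2 fun i => ?_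
    fin_cases i <;> assumption
  exact (PiLp.continuousLinearEquiv 2 ℝ (fun _ : Fin 3 => ℝ)).symm.hasFDerivAt.comp_hasDerivAt t h

lemma deriv_vec3_line (t : ℝ) : deriv (fun t => vec3 t 1 0) t = vec3 1 0 0 :=
  (hasDerivAt_vec3 (hasDerivAt_id t) (hasDerivAt_const t 1) (hasDerivAt_const t 0)).deriv

lemma deriv_vec3_circle (ε s : ℝ) :
    deriv (fun s => vec3 0 (1 + ε * cos s) (ε * sin s)) s = vec3 0 (-(ε * sin s)) (ε * cos s) := by
  have := hasDerivAt_vec3 (hasDerivAt_const s 0)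
    (((hasDerivAt_cos s).const_mul ε).const_add 1) ((hasDerivAt_sin s).const_mul ε)
  simpa using this.deriv

lemma linking_integrand_line_circle (ε t s : ℝ) :
    ⟪cross3 (vec3 1 0 0) (vec3 0 (-(ε * sin s)) (ε * cos s)),
        vec3 t 1 0 - vec3 0 (1 + ε * cos s) (ε * sin s)⟫ /
      ‖vec3 t 1 0 - vec3 0 (1 + ε * cos s) (ε * sin s)‖ ^ 3 = ε ^ 2 / √(t ^ 2 + ε ^ 2) ^ 3 := by
  have hcircle : (ε * cos s) ^ 2 + (ε * sin s) ^ 2 = ε ^ 2 := by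
    linear_combination ε ^ 2 * cos_sq_add_sin_sq s
  rw [cross3_vec3, vec3_sub, inner_vec3, norm_vec3]
  congr 1
  · linear_combination hcircle
  · congr 2; linear_combination hcircle

lemma hasDerivAt_div_sqrt_sq_add {c : ℝ} (hc : 0 < c) (t : ℝ) :
    HasDerivAt (fun t => t / √(t ^ 2 + c)) (c / √(t ^ 2 + c) ^ 3) t := by
  have hpos : 0 < t ^ 2 + c := by positivity
  have hsqrt : HasDerivAt (fun t => √(t ^ 2 + c)) (2 * t / (2 * √(t ^ 2 + c))) t := by
    simpa using ((hasDerivAt_pow 2 t).add_const c).sqrt hpos.ne'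
  refine ((hasDerivAt_id' t).div hsqrt (sqrt_pos.2 hpos).ne').congr_deriv ?_
  have hsq : √(t ^ 2 + c) ^ 2 = t ^ 2 + c := sq_sqrt hpos.le
  field_simp
  linear_combination hsq

lemma tendsto_div_sqrt_sq_add_atTop (c : ℝ) :
    Tendsto (fun t => t / √(t ^ 2 + c)) atTop (𝓝 1) := by
  have h : Tendsto (fun t : ℝ => (√(1 + c / t ^ 2))⁻¹) atTop (𝓝 1) := by
    have hlim : Tendsto (fun t : ℝ => 1 + c / t ^ 2) atTop (𝓝 1) := by
      simpa using
        (tendsto_const_nhds.div_atTop (tendsto_pow_atTop (α := ℝ) two_ne_zero)).const_add 1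
    simpa using (hlim.sqrt).inv₀ (by simp)
  refine h.congr' ?_
  filter_upwards [eventually_gt_atTop 0] with t ht
  rw [show t ^ 2 + c = t ^ 2 * (1 + c / t ^ 2) by field_simp, sqrt_mul (sq_nonneg t),
    sqrt_sq ht.le, div_mul_eq_div_div, div_self ht.ne', one_div]

lemma integral_div_sqrt_sq_add_pow_three {c : ℝ} (hc : 0 < c) :
    ∫ t, c / √(t ^ 2 + c) ^ 3 = 2 := by
  have half : ∫ t in Set.Ioi 0, c / √(t ^ 2 + c) ^ 3 = 1 := by
    rw [integral_Ioi_of_hasDerivAt_of_nonneg' (fun t _ => hasDerivAt_div_sqrt_sq_add hc t)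
      (fun t _ => by positivity) (tendsto_div_sqrt_sq_add_atTop c)]
    simp
  have := integral_comp_abs (f := fun t => c / √(t ^ 2 + c) ^ 3)
  simp only [sq_abs, half] at this
  linarith

theorem gauss_linking_integral_line_and_circle (ε : ℝ) (hε : 0 < ε)
    (γ₁ : ℝ → EuclideanSpace ℝ (Fin 3)) (γ₂ : ℝ → EuclideanSpace ℝ (Fin 3))
    (hγ₁ : γ₁ = fun t => vec3 t 1 0)
    (hγ₂ : γ₂ = fun s => vec3 0 (1 + ε * Real.cos s) (ε * Real.sin s)) :
    (1 / (4 * π)) * ∫ t : ℝ, ∫ s in (0 : ℝ)..(2 * π),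
        ⟪cross3 (deriv γ₁ t) (deriv γ₂ s), γ₁ t - γ₂ s⟫ / ‖γ₁ t - γ₂ s‖ ^ 3 = 1 := by
  subst hγ₁ hγ₂
  simp only [deriv_vec3_line, deriv_vec3_circle, linking_integrand_line_circle,
    intervalIntegral.integral_const, sub_zero, smul_eq_mul]
  rw [integral_const_mul, integral_div_sqrt_sq_add_pow_three (pow_pos hε 2)]
  field_simp
  ring
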